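/- Let w be a workload fluid model solution with w(0) ≤ d_max, and define τ(t) = inf{s ∈ [0,t] : w(s) + s ≥ t} for t ≥ 0. Then τ is well defined (the infimum is over a nonempty set), nondecreasing and continuous on [0,∞); τ(t) = 0 for all t ∈ [0, w(0)]; and w(τ(t)) + τ(t) = t for all t ≥ w(0). -/

import Mathlib

open MeasureTheory Set Filter Topology
open scoped ENNReal

noncomputable section

namespace OverloadedFIFO

/-- The complement `G(x) = Γ((x, ∞))` of the cumulative distribution function of `Γ`. -/
def Gk (Γ : MeasureTheory.Measure ℝ) (x : ℝ) : ℝ := (Γ (Set.Ioi x)).toReal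

/-- Model data: `K` job classes with arrival rates `lam`, service rates `mu`, and
deadline (patience) distributions `Γ`, in the overloaded regime `ρ > 1`.  Each `Γ k` is a
Borel probability measure on `[0,∞)` (no mass on negatives), with continuous c.d.f.
(no atoms, in particular `Γ k {0} = 0`) and finite mean. -/
structure Data (K : ℕ) where
  lam : Fin K → ℝ
  mu : Fin K → ℝ
  Γ : Fin K → MeasureTheory.Measure ℝ
  lam_pos : ∀ k, 0 < lam k
  mu_pos : ∀ k, 0 < mu k
  Γ_prob : ∀ k, MeasureTheory.IsProbabilityMeasure (Γ k)
  Γ_null_neg : ∀ k, Γ k (Set.Iio 0) = 0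
  Γ_noAtom : ∀ k, ∀ x : ℝ, Γ k {x} = 0
  Γ_finite_mean : ∀ k, MeasureTheory.Integrable id (Γ k)
  rho_gt_one : 1 < ∑ k, lam k / mu k

instance {K : ℕ} (D : Data K) (k : Fin K) : IsProbabilityMeasure (D.Γ k) := D.Γ_prob k

/-- `ρ_k = λ_k / μ_k`. -/
def Data.rho {K : ℕ} (D : Data K) (k : Fin K) : ℝ := D.lam k / D.mu k

/-- `ρ = Σ_k ρ_k`. -/
def Data.rhoTot {K : ℕ} (D : Data K) : ℝ := ∑ k, D.rho k

/-- A workload fluid model solution: a nonnegative function `w` on `[0,∞)` satisfying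
`w(t) = w(0) + Σ_k ρ_k ∫_0^t G_k(w(s)) ds − t` for all `t ≥ 0`. -/
def IsWorkloadSol {K : ℕ} (D : Data K) (w : ℝ → ℝ) : Prop :=
  (∀ t : ℝ, 0 ≤ t → 0 ≤ w t) ∧
  (∀ k : Fin K, ∀ t : ℝ, 0 ≤ t →
    IntervalIntegrable (fun s => Gk (D.Γ k) (w s)) volume 0 t) ∧
  (∀ t : ℝ, 0 ≤ t →
    w t = w 0 + (∑ k, D.rho k * ∫ s in (0:ℝ)..t, Gk (D.Γ k) (w s)) - t)

/-- `w_l = sup {u ≥ 0 : Σ_k ρ_k G_k(u) > 1}`. -/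
def wl {K : ℕ} (D : Data K) : ℝ :=
  sSup {u : ℝ | 0 ≤ u ∧ 1 < ∑ k, D.rho k * Gk (D.Γ k) u}

/-- `w_u = sup {u ≥ 0 : Σ_k ρ_k G_k(u) ≥ 1}`. -/
def wu {K : ℕ} (D : Data K) : ℝ :=
  sSup {u : ℝ | 0 ≤ u ∧ 1 ≤ ∑ k, D.rho k * Gk (D.Γ k) u}

/-- `d_max = max_k sup {x ≥ 0 : G_k(x) > 0} ∈ (0,∞]`, as an extended nonnegative real. -/
def dmax {K : ℕ} (D : Data K) : ℝ≥0∞ :=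
  ⨆ k, sSup (ENNReal.ofReal '' {x : ℝ | 0 ≤ x ∧ 0 < Gk (D.Γ k) x})

/-- `τ(t) = inf {s ∈ [0,t] : w(s) + s ≥ t}`. -/
def tauF (w : ℝ → ℝ) (t : ℝ) : ℝ := sInf {s : ℝ | 0 ≤ s ∧ s ≤ t ∧ t ≤ w s + s}

/-- The nonnegative quadrant `[0,∞)²`. -/
def Q : Set (ℝ × ℝ) := {p | 0 ≤ p.1 ∧ 0 ≤ p.2}

/-- The shift `B_x = {y ∈ [0,∞)² : y − x ∈ B}` of a set `B ⊆ [0,∞)²`. -/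
def shift (B : Set (ℝ × ℝ)) (x : ℝ × ℝ) : Set (ℝ × ℝ) :=
  {y | y ∈ Q ∧ (y.1 - x.1, y.2 - x.2) ∈ B}

/-- Diagonal shift `B_t = B_{(t,t)}`. -/
def shiftd (B : Set (ℝ × ℝ)) (t : ℝ) : Set (ℝ × ℝ) := shift B (t, t)

/-- The set `C = ([0,∞)×{0}) ∪ ({0}×[0,∞))`. -/
def Cset : Set (ℝ × ℝ) := {p | (0 ≤ p.1 ∧ p.2 = 0) ∨ (p.1 = 0 ∧ 0 ≤ p.2)}

/-- The `κ`-enlargement `B^κ = {x ∈ [0,∞)² : inf_{y ∈ B} ‖x−y‖ < κ}` (Euclidean norm). -/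
def enlarge (B : Set (ℝ × ℝ)) (κ : ℝ) : Set (ℝ × ℝ) :=
  {x | x ∈ Q ∧ ∃ y ∈ B, Real.sqrt ((x.1 - y.1) ^ 2 + (x.2 - y.2) ^ 2) < κ}

/-- `w_ϑ = sup {x ≥ 0 : ϑ_+([x,∞)×[0,∞)) > 0}` for a `K`-tuple `ϑ` of measures on `[0,∞)²`. -/
def wMeas {K : ℕ} (ϑ : Fin K → MeasureTheory.Measure (ℝ × ℝ)) : ℝ :=
  sSup {x : ℝ | 0 ≤ x ∧ 0 < ∑ k, ϑ k (Set.Ici x ×ˢ Set.Ici (0:ℝ))}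

/-- Membership in the set `I` of admissible initial measures: each `ϑ k` is a finite Borel
measure on `[0,∞)²`; (I.1) the superposition charges no corner set `C_x`, `x ∈ [0,∞)²`;
(I.2) `w_ϑ < ∞`; (I.3) `max_k G_k(w_ϑ − ε) > 0` for every `ε > 0`. -/
def MemI {K : ℕ} (D : Data K) (ϑ : Fin K → MeasureTheory.Measure (ℝ × ℝ)) : Prop :=
  (∀ k, IsFiniteMeasure (ϑ k)) ∧
  (∀ k, ϑ k Qᶜ = 0) ∧
  (∀ x ∈ Q, (∑ k, ϑ k (shift Cset x)) = 0) ∧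
  BddAbove {x : ℝ | 0 ≤ x ∧ 0 < ∑ k, ϑ k (Set.Ici x ×ˢ Set.Ici (0:ℝ))} ∧
  (∀ ε : ℝ, 0 < ε → ∃ k, 0 < Gk (D.Γ k) (wMeas ϑ - ε))

/-- `δ⁺_w`: the Dirac measure at `w` if `w > 0`, and the zero measure otherwise. -/
def deltaPlus (w : ℝ) : MeasureTheory.Measure ℝ :=
  if 0 < w then MeasureTheory.Measure.dirac w else 0

instance (w : ℝ) : SFinite (deltaPlus w) := by
  unfold deltaPlus; split_ifs <;> infer_instance

/-- `(δ⁺_w × Γ)(B)`, as a real number. -/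
def kern (Γ : MeasureTheory.Measure ℝ) (w : ℝ) (B : Set (ℝ × ℝ)) : ℝ :=
  (((deltaPlus w).prod Γ) B).toReal

/-- A (measure-valued) fluid model solution with initial measure `ϑ`: a family
`ζ(t) = (ζ_1(t),…,ζ_K(t))` of finite Borel measures on `[0,∞)²` with `ζ(0) = ϑ` satisfying
`ζ_k(t)(B) = ϑ_k(B_t) + λ_k ∫_0^t (δ⁺_{w(s)} × Γ_k)(B_{t−s}) ds` for every Borel
`B ⊆ [0,∞)²` and `t ≥ 0`, where `w` is the (unique) workload fluid model solution with
`w(0) = w_ϑ`. -/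
def IsFluidSol {K : ℕ} (D : Data K) (ϑ : Fin K → MeasureTheory.Measure (ℝ × ℝ))
    (ζ : ℝ → Fin K → MeasureTheory.Measure (ℝ × ℝ)) : Prop :=
  ∃ w : ℝ → ℝ, IsWorkloadSol D w ∧ w 0 = wMeas ϑ ∧
    (∀ t : ℝ, 0 ≤ t → ∀ k, IsFiniteMeasure (ζ t k) ∧ ζ t k Qᶜ = 0) ∧
    (∀ k, ζ 0 k = ϑ k) ∧
    (∀ k, ∀ B : Set (ℝ × ℝ), B ⊆ Q → MeasurableSet B → ∀ t : ℝ, 0 ≤ t →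
      IntervalIntegrable (fun s => kern (D.Γ k) (w s) (shiftd B (t - s))) volume 0 t ∧
      ζ t k B = ϑ k (shiftd B t) +
        ENNReal.ofReal (D.lam k * ∫ s in (0:ℝ)..t, kern (D.Γ k) (w s) (shiftd B (t - s))))

/-- The candidate invariant state `θ^w`:
`θ^w_k(B) = λ_k ∫_0^w Γ_k({p ≥ u : (w−u, p−u) ∈ B}) du`. -/
def thetaW {K : ℕ} (D : Data K) (w : ℝ) (k : Fin K) : MeasureTheory.Measure (ℝ × ℝ) :=
  ENNReal.ofReal (D.lam k) •
    MeasureTheory.Measure.map (fun up : ℝ × ℝ => (w - up.1, up.2 - up.1))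
      ((((MeasureTheory.volume.restrict (Set.Ioo (0:ℝ) w))).prod (D.Γ k)).restrict
        {up : ℝ × ℝ | up.1 ≤ up.2})
/-! The cumulative input `f(s) = w(s) + s = w(0) + Σ_k ρ_k ∫_0^s G_k(w(u)) du` is continuous and
nondecreasing, and `τ` is its generalized inverse, cut off at `0` below `f(0) = w(0)`.
`f` can only be flat where every `G_k(w)` vanishes, i.e. where `w ≥ d_max`. While `w > d_max`
the workload drains at unit rate, so a solution started below `d_max` never exceeds it, and then
a flat piece of `f` would force `w` strictly below a value `≥ d_max` that it already reached.
Hence `f` is strictly increasing, so it extends to an order isomorphism of `ℝ`, and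
`τ(t) = max (f⁻¹(t)) 0` inherits monotonicity and continuity. -/

lemma Gk_nonneg (Γ : Measure ℝ) (x : ℝ) : 0 ≤ Gk Γ x :=
  ENNReal.toReal_nonneg

lemma Gk_le_one (Γ : Measure ℝ) [IsProbabilityMeasure Γ] (x : ℝ) : Gk Γ x ≤ 1 :=
  ENNReal.toReal_le_of_le_ofReal zero_le_one (by simpa using prob_le_one)

lemma Gk_antitone (Γ : Measure ℝ) [IsFiniteMeasure Γ] : Antitone (Gk Γ) := fun _ _ hxy =>
  ENNReal.toReal_mono (measure_ne_top Γ _) (measure_mono (Ioi_subset_Ioi hxy))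

lemma integral_Gk_nonneg (Γ : Measure ℝ) (g : ℝ → ℝ) {a b : ℝ} (hab : a ≤ b) :
    0 ≤ ∫ s in a..b, Gk Γ (g s) :=
  intervalIntegral.integral_nonneg hab fun _ _ => Gk_nonneg _ _

lemma Data.rho_pos {K : ℕ} (D : Data K) (k : Fin K) : 0 < D.rho k :=
  div_pos (D.lam_pos k) (D.mu_pos k)

lemma dmax_le_ofReal {K : ℕ} (D : Data K) {x : ℝ} (hx : ∀ k, Gk (D.Γ k) x = 0) :
    dmax D ≤ ENNReal.ofReal x := by
  refine iSup_le fun k => sSup_le ?_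
  rintro _ ⟨y, ⟨-, hy⟩, rfl⟩
  refine ENNReal.ofReal_le_ofReal (le_of_not_gt fun hxy => ?_)
  exact hy.not_ge ((Gk_antitone _ hxy.le).trans (hx k).le)

lemma le_of_ofReal_le_dmax {K : ℕ} (D : Data K) {x y : ℝ} (hy : ENNReal.ofReal y ≤ dmax D)
    (hx0 : 0 ≤ x) (hx : ∀ k, Gk (D.Γ k) x = 0) : y ≤ x :=
  (ENNReal.ofReal_le_ofReal_iff hx0).1 (hy.trans (dmax_le_ofReal D hx))

namespace IsWorkloadSol

variable {K : ℕ} {D : Data K} {w : ℝ → ℝ} {a b : ℝ}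

lemma intervalIntegrable_Gk (hw : IsWorkloadSol D w) (k : Fin K) (ha : 0 ≤ a) (hb : 0 ≤ b) :
    IntervalIntegrable (fun s => Gk (D.Γ k) (w s)) volume a b :=
  (hw.2.1 k a ha).symm.trans (hw.2.1 k b hb)

lemma add_sub_add_eq (hw : IsWorkloadSol D w) (ha : 0 ≤ a) (hb : 0 ≤ b) :
    w b + b - (w a + a) = ∑ k, D.rho k * ∫ s in a..b, Gk (D.Γ k) (w s) := by
  have hsub : ∀ k, ((∫ s in (0:ℝ)..b, Gk (D.Γ k) (w s)) - ∫ s in (0:ℝ)..a, Gk (D.Γ k) (w s))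
      = ∫ s in a..b, Gk (D.Γ k) (w s) := fun k =>
    intervalIntegral.integral_interval_sub_left (hw.2.1 k b hb) (hw.2.1 k a ha)
  rw [hw.2.2 a ha, hw.2.2 b hb]
  simp only [← hsub, mul_sub, Finset.sum_sub_distrib]
  ring

lemma monotoneOn_add_id (hw : IsWorkloadSol D w) : MonotoneOn (fun s => w s + s) (Ici 0) := by
  intro a ha b hb hab
  have := hw.add_sub_add_eq ha hb
  have : 0 ≤ w b + b - (w a + a) := this ▸ Finset.sum_nonneg fun k _ =>
    mul_nonneg (D.rho_pos k).le (integral_Gk_nonneg _ w hab)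
  linarith

lemma add_id_le (hw : IsWorkloadSol D w) (ha : 0 ≤ a) (hab : a ≤ b) :
    w b + b ≤ w a + a + D.rhoTot * (b - a) := by
  have hG : ∀ k, (∫ s in a..b, Gk (D.Γ k) (w s)) ≤ b - a := fun k => by
    simpa using intervalIntegral.integral_mono_on hab (hw.intervalIntegrable_Gk k ha
      (ha.trans hab)) intervalIntegrable_const fun _ _ => Gk_le_one _ _
  have := hw.add_sub_add_eq ha (ha.trans hab)
  have : w b + b - (w a + a) ≤ D.rhoTot * (b - a) := by
    rw [this, Data.rhoTot, Finset.sum_mul]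
    exact Finset.sum_le_sum fun k _ => mul_le_mul_of_nonneg_left (hG k) (D.rho_pos k).le
  linarith

lemma lipschitzOnWith_add_id (hw : IsWorkloadSol D w) :
    LipschitzOnWith D.rhoTot.toNNReal (fun s => w s + s) (Ici 0) := by
  have hρ : 0 ≤ D.rhoTot := Finset.sum_nonneg fun k _ => (D.rho_pos k).le
  refine LipschitzOnWith.of_le_add_mul' _ fun a ha b hb => ?_
  rcases le_total a b with hab | hba
  · linarith [hw.monotoneOn_add_id ha hb hab, mul_nonneg hρ (dist_nonneg : 0 ≤ dist a b)]
  · rw [Real.dist_eq, abs_of_nonneg (sub_nonneg.2 hba)]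
    exact hw.add_id_le hb hba

lemma continuousOn (hw : IsWorkloadSol D w) : ContinuousOn w (Ici 0) := by
  refine (hw.lipschitzOnWith_add_id.continuousOn.sub continuousOn_id).congr fun s _ => ?_
  simp

lemma add_id_eq_of_Gk_eq_zero (hw : IsWorkloadSol D w) (ha : 0 ≤ a) (hab : a ≤ b)
    (hG : ∀ u ∈ Ioc a b, ∀ k, Gk (D.Γ k) (w u) = 0) : w b + b = w a + a := by
  have hI : ∀ k, (∫ s in a..b, Gk (D.Γ k) (w s)) = 0 := fun k => by
    rw [intervalIntegral.integral_of_le hab, setIntegral_congr_fun measurableSet_Ioc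
      (fun u hu => hG u hu k : EqOn _ (fun _ => (0:ℝ)) _)]
    simp
  have := hw.add_sub_add_eq ha (ha.trans hab)
  simp only [hI, mul_zero, Finset.sum_const_zero] at this
  linarith

/-- Along a flat piece of `w + id` the workload decreases at unit rate, so `G_k(w)` can only
grow there; its integral being zero forces `G_k(w a) = 0`. -/
lemma Gk_eq_zero_of_add_id_eq (hw : IsWorkloadSol D w) (ha : 0 ≤ a) (hab : a < b)
    (hflat : w b + b = w a + a) (k : Fin K) : Gk (D.Γ k) (w a) = 0 := by
  have hb : 0 ≤ b := ha.trans hab.le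
  have hI : (∫ s in a..b, Gk (D.Γ k) (w s)) = 0 := by
    have hsum := hw.add_sub_add_eq ha hb
    rw [hflat, sub_self, eq_comm, Finset.sum_eq_zero_iff_of_nonneg fun k _ =>
      mul_nonneg (D.rho_pos k).le (integral_Gk_nonneg _ w hab.le)] at hsum
    exact (mul_eq_zero.1 (hsum k (Finset.mem_univ k))).resolve_left (D.rho_pos k).ne'
  have hw_le : ∀ u ∈ Icc a b, w u ≤ w a := fun u ⟨hau, hub⟩ => by
    have h1 := hw.monotoneOn_add_id ha (ha.trans hau) hau
    have h2 := hw.monotoneOn_add_id (ha.trans hau) hb hub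
    simp only at h1 h2
    linarith
  have hlow : (b - a) * Gk (D.Γ k) (w a) ≤ 0 := by
    simpa [hI] using intervalIntegral.integral_mono_on hab.le intervalIntegrable_const
      (hw.intervalIntegrable_Gk k ha hb) fun u hu => Gk_antitone _ (hw_le u hu)
  nlinarith [Gk_nonneg (D.Γ k) (w a)]

/-- A level `x` at which all `G_k` vanish is never crossed upwards: above it nothing arrives,
so from the last time `c` with `w c ≤ x` the workload only drains. -/
lemma le_of_forall_Gk_eq_zero (hw : IsWorkloadSol D w) {x t : ℝ}
    (hx : ∀ k, Gk (D.Γ k) x = 0) (h0 : w 0 ≤ x) (ht : 0 ≤ t) : w t ≤ x := by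
  set S := Icc 0 t ∩ w ⁻¹' Iic x
  have hS : IsClosed S := (hw.continuousOn.mono Icc_subset_Ici_self).preimage_isClosed_of_isClosed
    isClosed_Icc isClosed_Iic
  have hbdd : BddAbove S := ⟨t, fun _ hs => hs.1.2⟩
  obtain ⟨⟨hc0, hct⟩, hcx⟩ := hS.csSup_mem ⟨0, ⟨le_rfl, ht⟩, h0⟩ hbdd
  have hG : ∀ u ∈ Ioc (sSup S) t, ∀ k, Gk (D.Γ k) (w u) = 0 := fun u hu k => by
    have hxu : x ≤ w u := le_of_not_gt fun hux =>
      hu.1.not_ge (le_csSup hbdd ⟨⟨hc0.trans hu.1.le, hu.2⟩, hux.le⟩)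
    exact le_antisymm ((Gk_antitone _ hxu).trans (hx k).le) (Gk_nonneg _ _)
  have := hw.add_id_eq_of_Gk_eq_zero hc0 hct hG
  have : w (sSup S) ≤ x := hcx
  linarith

lemma strictMonoOn_add_id (hw : IsWorkloadSol D w) (h0 : ENNReal.ofReal (w 0) ≤ dmax D) :
    StrictMonoOn (fun s => w s + s) (Ici 0) := by
  intro a (ha : 0 ≤ a) b (hb : 0 ≤ b) hab
  obtain ⟨m, ham, hmb⟩ := exists_between hab
  have hm : 0 ≤ m := ha.trans ham.le
  have hf := hw.monotoneOn_add_id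
  refine (hf ha hb hab.le).lt_of_ne fun (hflat : w a + a = w b + b) => ?_
  have ham' : w a + a ≤ w m + m := hf ha hm ham.le
  have hmb' : w m + m ≤ w b + b := hf hm hb hmb.le
  have hG := hw.Gk_eq_zero_of_add_id_eq hm hmb (by linarith)
  have := hw.le_of_forall_Gk_eq_zero hG (le_of_ofReal_le_dmax D h0 (hw.1 m hm) hG) ha
  linarith

end IsWorkloadSol

lemma exists_orderIso_eqOn_Ici {f : ℝ → ℝ} (hmono : StrictMonoOn f (Ici 0))
    (hcont : ContinuousOn f (Ici 0)) (htop : Tendsto f atTop atTop) :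
    ∃ e : ℝ ≃o ℝ, EqOn e f (Ici 0) := by
  set F : ℝ → ℝ := fun s => f (max s 0) + min s 0
  have hF : EqOn F f (Ici 0) := fun s (hs : 0 ≤ s) => by simp [F, hs]
  have hFmono : StrictMono F := by
    intro s s' hss'
    rcases le_or_gt s' 0 with hs' | hs'
    · simp only [F, max_eq_right hs', max_eq_right (hss'.le.trans hs'), min_eq_left hs',
        min_eq_left (hss'.le.trans hs')]
      linarith
    · refine add_lt_add_of_lt_of_le (hmono (mem_Ici.2 (le_max_right _ _))
        (mem_Ici.2 (le_max_right _ _)) ?_) (min_le_min_right _ hss'.le)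
      exact (max_lt hss' hs').trans_le (le_max_left _ _)
  have hFcont : Continuous F :=
    (hcont.comp_continuous (continuous_id.max continuous_const) fun s => le_max_right s 0).add
      (continuous_id.min continuous_const)
  have hFtop : Tendsto F atTop atTop :=
    htop.congr' (eventually_ge_atTop 0 |>.mono fun _ hs => (hF hs).symm)
  have hFbot : Tendsto F atBot atBot :=
    (tendsto_atBot_add_const_left _ (f 0) tendsto_id).congr'
      (eventually_le_atBot 0 |>.mono fun s hs => by simp [F, hs])
  exact ⟨StrictMono.orderIsoOfSurjective F hFmono (hFcont.surjective hFtop hFbot), hF⟩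

section tauF

variable {w : ℝ → ℝ} (e : ℝ ≃o ℝ) {t : ℝ}

lemma isLeast_max_symm_zero (he : EqOn e (fun s => w s + s) (Ici 0))
    (hw : ∀ s, 0 ≤ s → 0 ≤ w s) (ht : 0 ≤ t) :
    IsLeast {s : ℝ | 0 ≤ s ∧ s ≤ t ∧ t ≤ w s + s} (max (e.symm t) 0) := by
  refine ⟨?_, fun s ⟨hs, _, hts⟩ => max_le ?_ hs⟩
  · rcases le_total (e.symm t) 0 with hneg | hpos
    · rw [max_eq_right hneg]
      refine ⟨le_rfl, ht, ?_⟩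
      have he0 : e 0 = w 0 := by simpa using he self_mem_Ici
      simpa [← he0] using e.symm_apply_le.1 hneg
    · have := he hpos
      simp only [OrderIso.apply_symm_apply] at this
      rw [max_eq_left hpos]
      exact ⟨hpos, by linarith [hw _ hpos], this.le⟩
  · exact e.symm_apply_le.2 (hts.trans_eq (he hs).symm)

lemma tauF_eq_max_symm_zero (he : EqOn e (fun s => w s + s) (Ici 0))
    (hw : ∀ s, 0 ≤ s → 0 ≤ w s) (ht : 0 ≤ t) : tauF w t = max (e.symm t) 0 :=
  (isLeast_max_symm_zero e he hw ht).csInf_eq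

end tauF

/-- Properties of `τ(t) = inf {s ∈ [0,t] : w(s) + s ≥ t}`: the infimum is over
a nonempty set; `τ` is nondecreasing and continuous on `[0,∞)`; `τ(t) = 0` for
`t ∈ [0, w(0)]`; and `w(τ(t)) + τ(t) = t` for all `t ≥ w(0)`. -/
theorem tau_properties {K : ℕ} (D : Data K) (w : ℝ → ℝ)
    (hw : IsWorkloadSol D w) (h0 : ENNReal.ofReal (w 0) ≤ dmax D) :
    (∀ t : ℝ, 0 ≤ t → {s : ℝ | 0 ≤ s ∧ s ≤ t ∧ t ≤ w s + s}.Nonempty) ∧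
    MonotoneOn (tauF w) (Set.Ici (0:ℝ)) ∧
    ContinuousOn (tauF w) (Set.Ici (0:ℝ)) ∧
    (∀ t : ℝ, 0 ≤ t → t ≤ w 0 → tauF w t = 0) ∧
    (∀ t : ℝ, w 0 ≤ t → w (tauF w t) + tauF w t = t) := by
  have hw0 : ∀ s, 0 ≤ s → 0 ≤ w s := hw.1
  have htop : Tendsto (fun s => w s + s) atTop atTop :=
    tendsto_atTop_mono' _ (eventually_ge_atTop 0 |>.mono fun s hs => le_add_of_nonneg_left
      (hw0 s hs)) tendsto_id
  obtain ⟨e, he⟩ := exists_orderIso_eqOn_Ici (hw.strictMonoOn_add_id h0)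
    hw.lipschitzOnWith_add_id.continuousOn htop
  have hτ : EqOn (tauF w) (fun t => max (e.symm t) 0) (Ici 0) := fun t ht =>
    tauF_eq_max_symm_zero e he hw0 ht
  have he0 : e 0 = w 0 := by simpa using he self_mem_Ici
  refine ⟨fun t ht => (isLeast_max_symm_zero e he hw0 ht).nonempty, ?_, ?_, ?_, ?_⟩
  · exact ((e.symm.monotone.max monotone_const).monotoneOn _).congr hτ.symm
  · exact (e.symm.continuous.max continuous_const).continuousOn.congr hτ
  · intro t ht htw
    rw [tauF_eq_max_symm_zero e he hw0 ht, max_eq_right (e.symm_apply_le.2 (he0 ▸ htw))]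
  · intro t ht
    have hpos : 0 ≤ e.symm t := e.le_symm_apply.2 (he0 ▸ ht)
    rw [tauF_eq_max_symm_zero e he hw0 ((hw0 0 le_rfl).trans ht), max_eq_left hpos]
    exact (he hpos).symm.trans (e.apply_symm_apply t)

end OverloadedFIFO
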